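/- arXiv:2206.09454 — 4 statements merged into one kernel-verified Lean document; each statement's English description precedes it below -/
import Mathlib

section
/- For all integers 1 < m ≤ N, the real quasimaximal relative projection constant satisfies μ_ℝ(m,N) ≤ δ_{m, m(m+1)/2} = (2/(m+1))·(1 + ((m−1)/2)·√(m+2)). -/
open scoped BigOperators

noncomputable section

/-- `P` is a continuous linear projection from `ℓ∞^N(K)` (that is, `Fin N → K` equipped with
the sup norm, which is the default norm on `Fin N → K`) onto the subspace `Y`. -/
def IsProjectionOnto {K : Type*} [RCLike K] {N : ℕ} (Y : Submodule K (Fin N → K))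
    (P : (Fin N → K) →L[K] (Fin N → K)) : Prop :=
  (∀ x, P x ∈ Y) ∧ ∀ y ∈ Y, P y = y

/-- The relative projection constant `λ(Y, ℓ∞^N(K))` of a subspace `Y ⊆ ℓ∞^N(K)`. -/
def relProjConst {K : Type*} [RCLike K] {N : ℕ} (Y : Submodule K (Fin N → K)) : ℝ :=
  sInf {c : ℝ | ∃ P, IsProjectionOnto Y P ∧ c = ‖P‖}

/-- The maximal relative projection constant `λ_K(m, N)`. -/
def maxRelProjConst (K : Type*) [RCLike K] (m N : ℕ) : ℝ :=
  sSup {c : ℝ | ∃ Y : Submodule K (Fin N → K), Module.finrank K Y = m ∧ c = relProjConst Y}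

/-- The maximal absolute projection constant `λ_K(m)`. -/
def maxAbsProjConst (K : Type*) [RCLike K] (m : ℕ) : ℝ :=
  sSup {c : ℝ | ∃ N, m ≤ N ∧ c = maxRelProjConst K m N}

/-- The quasimaximal relative projection constant `μ_K(m, N)`. -/
def quasiMaxRelProjConst (K : Type*) [RCLike K] (m N : ℕ) : ℝ :=
  sSup {c : ℝ | ∃ U : Matrix (Fin m) (Fin N) K, U * U.conjTranspose = 1 ∧
    c = (1 / (N : ℝ)) * ∑ i, ∑ j, ‖(U.conjTranspose * U) i j‖}

/-- The quasimaximal absolute projection constant `μ_K(m)`. -/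
def quasiMaxAbsProjConst (K : Type*) [RCLike K] (m : ℕ) : ℝ :=
  sSup {c : ℝ | ∃ N, m ≤ N ∧ c = quasiMaxRelProjConst K m N}

/-- The constant `δ_{m,N} = (m/N)(1 + √((N-1)(N-m)/m))`. -/
def deltaConst (m N : ℕ) : ℝ :=
  ((m : ℝ) / N) * (1 + Real.sqrt (((N : ℝ) - 1) * ((N : ℝ) - m) / m))

/-- `u` is an equiangular tight frame of `N` vectors in `K^m`: the vectors are unit vectors,
the matrix `U` with columns `u 1, …, u N` satisfies `U * Uᴴ = α⁻¹ • I` for some `α > 0`,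
and `|⟨u i, u j⟩|` is constant over all pairs `i ≠ j`. -/
def IsETF {K : Type*} [RCLike K] {m N : ℕ} (u : Fin N → EuclideanSpace K (Fin m)) : Prop :=
  (∀ i, ‖u i‖ = 1) ∧
  (∃ α : ℝ, 0 < α ∧
    (Matrix.of fun k i => u i k : Matrix (Fin m) (Fin N) K) *
        (Matrix.of fun k i => u i k : Matrix (Fin m) (Fin N) K).conjTranspose
      = α⁻¹ • (1 : Matrix (Fin m) (Fin m) K)) ∧
  ∃ c : ℝ, ∀ i j, i ≠ j → ‖(inner K (u i) (u j) : K)‖ = c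

/-!
Write `u_i` for the columns of `U`, `t_i = ‖u_i‖`, `c_ij = ⟨u_i, u_j⟩ / (t_i t_j) ∈ [-1, 1]` and
`r = √(m + 2)`. The even quartic `p(c) = (r + 2 + r (r² + 2r + 3) c² - r³ c⁴) / (2 (r + 1)²)`
majorizes `|c|` on `[-1, 1]` and touches it at `|c| = 1/r` and `|c| = 1`. Hence
`∑ |⟨u_i, u_j⟩| = ∑ t_i t_j |c_ij|` is bounded by a combination of `T² = (∑ t_i)²`,
`Q₂ = ∑ t_i t_j c_ij²` and `Q₄ = ∑ t_i t_j c_ij⁴`, into which we feed three frame estimates: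
`T² ≤ N m` (Cauchy–Schwarz and `∑ t_i² = m`), `Q₂ ≤ N` (AM-GM and the fact that `UᵀU` is an
orthogonal projection), and the spherical 4-design bound `3 T² ≤ m (m + 2) Q₄` (Cauchy–Schwarz
against the isotropic tensor `δ_ab δ_cd + δ_ac δ_bd + δ_ad δ_bc`). The resulting bound is
`N (r - 1) (r + 2) / (r + 1) = N δ_{m, m(m+1)/2}`.
-/

open Matrix Finset

theorem abs_le_quartic_of_abs_le_one {r c : ℝ} (hr : 0 ≤ r) (hc : |c| ≤ 1) :
    2 * (r + 1) ^ 2 * |c| ≤ r + 2 + r * (r ^ 2 + 2 * r + 3) * c ^ 2 - r ^ 3 * c ^ 4 := by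
  have key : 0 ≤ (r * |c| - 1) ^ 2 * (1 - |c|) * (r * |c| + r + 2) := by
    have := abs_nonneg c
    have : 0 ≤ 1 - |c| := by linarith
    positivity
  rw [← sq_abs c, ← (Even.pow_abs (by decide) c)]
  linear_combination key

theorem abs_le_quartic_div {r x y : ℝ} (hr : 0 ≤ r) (hxy : |x| ≤ y) :
    2 * (r + 1) ^ 2 * |x| ≤
      (r + 2) * y + r * (r ^ 2 + 2 * r + 3) * (x ^ 2 / y) - r ^ 3 * (x ^ 4 / y ^ 3) := by
  rcases ((abs_nonneg x).trans hxy).eq_or_lt with hy | hy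
  · obtain rfl : x = 0 := abs_nonpos_iff.mp (hy ▸ hxy)
    simp [← hy]
  · have hc : |x / y| ≤ 1 := by rw [abs_div, abs_of_pos hy]; exact div_le_one_of_le₀ hxy hy.le
    calc 2 * (r + 1) ^ 2 * |x| = y * (2 * (r + 1) ^ 2 * |x / y|) := by
          rw [abs_div, abs_of_pos hy]; field_simp
      _ ≤ y * (r + 2 + r * (r ^ 2 + 2 * r + 3) * (x / y) ^ 2 - r ^ 3 * (x / y) ^ 4) := by
          gcongr; exact abs_le_quartic_of_abs_le_one hr hc
      _ = _ := by field_simp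

theorem le_of_quartic_bounds {r N S T Q₂ Q₄ : ℝ} (hr : 2 ≤ r) (hT : T ^ 2 ≤ N * (r ^ 2 - 2))
    (hQ₂ : Q₂ ≤ N) (hQ₄ : 3 * T ^ 2 ≤ (r ^ 2 - 2) * r ^ 2 * Q₄)
    (hS : 2 * (r + 1) ^ 2 * S ≤ (r + 2) * T ^ 2 + r * (r ^ 2 + 2 * r + 3) * Q₂ - r ^ 3 * Q₄) :
    S ≤ N * ((r - 1) * (r + 2) / (r + 1)) := by
  have hr₂ : 0 < r ^ 2 - 2 := by nlinarith
  have hT' := mul_le_mul_of_nonneg_left hT (show 0 ≤ r ^ 3 + 2 * r ^ 2 - 5 * r - 4 by nlinarith)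
  have hQ₂' := mul_le_mul_of_nonneg_left hQ₂
    (show 0 ≤ (r ^ 2 - 2) * r * (r ^ 2 + 2 * r + 3) by positivity)
  have hQ₄' := mul_le_mul_of_nonneg_left hQ₄ (show 0 ≤ r by linarith)
  have hS' := mul_le_mul_of_nonneg_left hS hr₂.le
  -- `(r² - 2) hS + r hQ₄` eliminates `Q₄`, leaving `T²` with coefficient `r³ + 2r² - 5r - 4 ≥ 0`.
  have key : (r ^ 2 - 2) * (2 * (r + 1)) * ((r + 1) * S - (r - 1) * (r + 2) * N) ≤ 0 := by
    linarith
  have : (r + 1) * S ≤ (r - 1) * (r + 2) * N :=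
    sub_nonpos.mp (nonpos_of_mul_nonpos_right key (by positivity))
  rw [mul_div_assoc', le_div_iff₀ (by linarith)]
  linarith

theorem two_div_mul_one_add_mul_sqrt {M : ℝ} (hM : -1 < M) :
    2 / (M + 1) * (1 + (M - 1) / 2 * √(M + 2)) =
      (√(M + 2) - 1) * (√(M + 2) + 2) / (√(M + 2) + 1) := by
  have hr₁ : 1 < √(M + 2) := Real.lt_sqrt_of_sq_lt (by linarith)
  have hr₂ : √(M + 2) ^ 2 = M + 2 := Real.sq_sqrt (by linarith)
  generalize √(M + 2) = r at hr₁ hr₂ ⊢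
  obtain rfl : M = r ^ 2 - 2 := by linarith
  have : r ^ 2 - 2 + 1 = (r - 1) * (r + 1) := by ring
  rw [this]
  field_simp [sub_ne_zero.mpr hr₁.ne']
  ring

theorem deltaConst_mul_succ_div_two {m : ℕ} (hm : 1 ≤ m) :
    deltaConst m (m * (m + 1) / 2) =
      2 / ((m : ℝ) + 1) * (1 + ((m : ℝ) - 1) / 2 * √((m : ℝ) + 2)) := by
  have hm' : (1 : ℝ) ≤ m := by exact_mod_cast hm
  have hcast : ((m * (m + 1) / 2 : ℕ) : ℝ) = m * (m + 1) / 2 := by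
    rw [Nat.cast_div (Nat.even_mul_succ_self m).two_dvd (by norm_num)]
    push_cast
    ring
  have hrad : ((m * (m + 1) / 2 : ℝ) - 1) * (m * (m + 1) / 2 - m) / m =
      (((m : ℝ) - 1) / 2) ^ 2 * (m + 2) := by
    field_simp
    ring
  rw [deltaConst, hcast, hrad, Real.sqrt_mul (sq_nonneg _), Real.sqrt_sq (by linarith)]
  field_simp

section Frame

variable {ι κ : Type*} [Fintype ι] [Fintype κ]

theorem dotProduct_self_nonneg (x : κ → ℝ) : 0 ≤ x ⬝ᵥ x := by
  simpa using dotProduct_self_star_nonneg x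

theorem abs_dotProduct_le (x y : κ → ℝ) : |x ⬝ᵥ y| ≤ √(x ⬝ᵥ x) * √(y ⬝ᵥ y) := by
  rw [← Real.sqrt_mul (dotProduct_self_nonneg x)]
  exact Real.abs_le_sqrt (by simpa [dotProduct, sq] using sum_mul_sq_le_sq_mul_sq univ x y)

theorem sum_sq_dotProduct_eq [DecidableEq κ] {V : Matrix ι κ ℝ} (hV : Vᵀ * V = 1)
    (x : κ → ℝ) : ∑ i, (V i ⬝ᵥ x) ^ 2 = x ⬝ᵥ x := by
  have : (V *ᵥ x) ⬝ᵥ (V *ᵥ x) = x ⬝ᵥ x := by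
    rw [dotProduct_mulVec, ← vecMul_transpose, vecMul_vecMul, hV, vecMul_one]
  simpa [dotProduct, sq, mulVec] using this

theorem sum_dotProduct_self_eq_card [DecidableEq κ] {V : Matrix ι κ ℝ} (hV : Vᵀ * V = 1) :
    ∑ i, V i ⬝ᵥ V i = Fintype.card κ := by
  have := congrArg trace hV
  rw [trace_mul_comm, trace_one] at this
  simpa [trace, mul_apply', dotProduct] using this

theorem sq_sum_sqrt_dotProduct_self_le [DecidableEq κ] {V : Matrix ι κ ℝ} (hV : Vᵀ * V = 1) :
    (∑ i, √(V i ⬝ᵥ V i)) ^ 2 ≤ Fintype.card ι * Fintype.card κ := by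
  calc (∑ i, √(V i ⬝ᵥ V i)) ^ 2 ≤ Fintype.card ι * ∑ i, √(V i ⬝ᵥ V i) ^ 2 := by
        simpa using sq_sum_le_card_mul_sum_sq (s := univ) (f := fun i => √(V i ⬝ᵥ V i))
    _ = Fintype.card ι * Fintype.card κ := by
        simp_rw [Real.sq_sqrt (dotProduct_self_nonneg _), sum_dotProduct_self_eq_card hV]

theorem div_mul_le_half_add_div_sq {y : ℝ} (hy : 0 ≤ y) (a b : ℝ) :
    y / (a * b) ≤ (y / a ^ 2 + y / b ^ 2) / 2 := by
  calc y / (a * b) = y * (2 * a⁻¹ * b⁻¹) / 2 := by ring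
    _ ≤ y * (a⁻¹ ^ 2 + b⁻¹ ^ 2) / 2 := by gcongr; exact two_mul_le_add_sq _ _
    _ = (y / a ^ 2 + y / b ^ 2) / 2 := by ring

theorem sum_sum_div_mul_le_card {f : ι → ι → ℝ} (hf : ∀ i j, 0 ≤ f i j)
    (hsymm : ∀ i j, f i j = f j i) {t : ι → ℝ} (hcol : ∀ j, ∑ i, f i j / t j ^ 2 ≤ 1) :
    ∑ i, ∑ j, f i j / (t i * t j) ≤ Fintype.card ι := by
  have hrow : ∀ i, ∑ j, f i j / t i ^ 2 ≤ 1 := fun i => by simpa only [hsymm i] using hcol i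
  calc ∑ i, ∑ j, f i j / (t i * t j)
      ≤ ∑ i, ∑ j, (f i j / t i ^ 2 + f i j / t j ^ 2) / 2 :=
        sum_le_sum fun i _ => sum_le_sum fun j _ => div_mul_le_half_add_div_sq (hf i j) _ _
    _ = ((∑ i, ∑ j, f i j / t i ^ 2) + ∑ j, ∑ i, f i j / t j ^ 2) / 2 := by
        rw [sum_comm (f := fun j i => f i j / t j ^ 2)]
        simp only [add_div, sum_div, sum_add_distrib]
    _ ≤ ((∑ _i : ι, (1 : ℝ)) + ∑ _j : ι, (1 : ℝ)) / 2 := by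
        gcongr with i _ j _
        exacts [hrow i, hcol j]
    _ = Fintype.card ι := by simp

theorem sum_sq_dotProduct_div_le_card [DecidableEq κ] {V : Matrix ι κ ℝ} (hV : Vᵀ * V = 1) :
    ∑ i, ∑ j, (V i ⬝ᵥ V j) ^ 2 / (√(V i ⬝ᵥ V i) * √(V j ⬝ᵥ V j)) ≤ Fintype.card ι := by
  refine sum_sum_div_mul_le_card (fun _ _ => sq_nonneg _)
    (fun i j => by rw [dotProduct_comm]) fun j => ?_
  rw [← sum_div, sum_sq_dotProduct_eq hV, Real.sq_sqrt (dotProduct_self_nonneg _)]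
  exact div_self_le_one _

def tensorPowFour (x : κ → ℝ) : κ × κ × κ × κ → ℝ
  | (a, b, c, d) => x a * x b * x c * x d

def pairingTensor (κ : Type*) [DecidableEq κ] : κ × κ × κ × κ → ℝ
  | (a, b, c, d) => (if a = b then 1 else 0) * (if c = d then 1 else 0) +
      (if a = c then 1 else 0) * (if b = d then 1 else 0) +
      (if a = d then 1 else 0) * (if b = c then 1 else 0)

theorem sum_tensorPowFour_mul (x y : κ → ℝ) :
    ∑ q, tensorPowFour x q * tensorPowFour y q = (x ⬝ᵥ y) ^ 4 := by
  simp only [Fintype.sum_prod_type, tensorPowFour, dotProduct, pow_succ, pow_zero, one_mul,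
    sum_mul, mul_sum]
  refine sum_congr rfl fun a _ => sum_congr rfl fun b _ => sum_congr rfl fun c _ =>
    sum_congr rfl fun d _ => by ring

theorem sum_tensorPowFour_mul_pairingTensor [DecidableEq κ] (x : κ → ℝ) :
    ∑ q, tensorPowFour x q * pairingTensor κ q = 3 * (x ⬝ᵥ x) ^ 2 := by
  rw [sq, dotProduct, sum_mul_sum]
  simp only [tensorPowFour, pairingTensor, mul_ite, mul_one, mul_zero, mul_add, sum_add_distrib,
    Fintype.sum_prod_type, sum_ite_eq, mem_univ, if_true, sum_ite_irrel, sum_const_zero, mul_sum]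
  simp only [← sum_add_distrib]
  exact sum_congr rfl fun _ _ => sum_congr rfl fun _ _ => by ring

theorem sum_pairingTensor_sq [DecidableEq κ] :
    ∑ q, pairingTensor κ q ^ 2 = 3 * (Fintype.card κ : ℝ) ^ 2 + 6 * Fintype.card κ := by
  simp only [pairingTensor, mul_ite, mul_one, mul_zero, add_sq, ite_pow, one_pow, ne_eq,
    OfNat.ofNat_ne_zero, not_false_eq_true, zero_pow, sum_add_distrib, Fintype.sum_prod_type,
    sum_ite_eq, mem_univ, if_true, sum_boole, filter_const, sum_const, card_univ, nsmul_eq_mul,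
    sum_ite_irrel]
  simp +contextual only [apply_ite Finset.card, card_univ, card_empty, Nat.cast_ite,
    CharP.cast_eq_zero, sum_ite_eq, if_true, sum_const, nsmul_eq_mul]
  simp only [← mul_sum, sum_add_distrib, sum_ite_eq', mem_univ, if_true, sum_const, card_univ,
    nsmul_eq_mul]
  ring

theorem three_mul_sq_sum_le_card_mul_sum_dotProduct_pow_four [DecidableEq κ] (w : ι → ℝ)
    (v : ι → κ → ℝ) :
    3 * (∑ i, w i * (v i ⬝ᵥ v i) ^ 2) ^ 2 ≤
      Fintype.card κ * (Fintype.card κ + 2) * ∑ i, ∑ j, w i * w j * (v i ⬝ᵥ v j) ^ 4 := by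
  set F : κ × κ × κ × κ → ℝ := fun q => ∑ i, w i * tensorPowFour (v i) q
  have hFτ : ∑ q, F q * pairingTensor κ q = 3 * ∑ i, w i * (v i ⬝ᵥ v i) ^ 2 :=
    calc ∑ q, F q * pairingTensor κ q
        = ∑ q, ∑ i, w i * (tensorPowFour (v i) q * pairingTensor κ q) := by
          simp only [F, sum_mul, mul_assoc]
      _ = ∑ i, w i * (3 * (v i ⬝ᵥ v i) ^ 2) := by
          rw [sum_comm]
          simp only [← mul_sum, sum_tensorPowFour_mul_pairingTensor]
      _ = 3 * ∑ i, w i * (v i ⬝ᵥ v i) ^ 2 := by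
          rw [mul_sum]
          exact sum_congr rfl fun _ _ => by ring
  have hFF : ∑ q, F q ^ 2 = ∑ i, ∑ j, w i * w j * (v i ⬝ᵥ v j) ^ 4 :=
    calc ∑ q, F q ^ 2
        = ∑ q, ∑ i, ∑ j, w i * w j * (tensorPowFour (v i) q * tensorPowFour (v j) q) := by
          simp only [F, sq, sum_mul_sum]
          exact sum_congr rfl fun _ _ => sum_congr rfl fun _ _ => sum_congr rfl fun _ _ => by ring
      _ = ∑ i, ∑ j, w i * w j * (v i ⬝ᵥ v j) ^ 4 := by
          rw [sum_comm]
          refine sum_congr rfl fun i _ => ?_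
          rw [sum_comm]
          simp only [← mul_sum, sum_tensorPowFour_mul]
  have hCS := sum_mul_sq_le_sq_mul_sq univ F (pairingTensor κ)
  rw [hFτ, hFF, sum_pairingTensor_sq] at hCS
  nlinarith [hCS]

theorem three_mul_sq_sum_sqrt_le [DecidableEq κ] (V : Matrix ι κ ℝ) :
    3 * (∑ i, √(V i ⬝ᵥ V i)) ^ 2 ≤ Fintype.card κ * (Fintype.card κ + 2) *
      ∑ i, ∑ j, (V i ⬝ᵥ V j) ^ 4 / (√(V i ⬝ᵥ V i) * √(V j ⬝ᵥ V j)) ^ 3 := by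
  -- weights `t_i⁻³`; at a zero row the junk value `0⁻¹ = 0` makes both sides vanish
  have hw : ∀ i, (√(V i ⬝ᵥ V i) ^ 3)⁻¹ * (V i ⬝ᵥ V i) ^ 2 = √(V i ⬝ᵥ V i) := fun i => by
    obtain ⟨t, ht, ht₂⟩ : ∃ t, √(V i ⬝ᵥ V i) = t ∧ V i ⬝ᵥ V i = t ^ 2 :=
      ⟨_, rfl, (Real.sq_sqrt (dotProduct_self_nonneg (V i))).symm⟩
    rw [ht, ht₂]
    rcases eq_or_ne t 0 with h | h
    · simp [h]
    · field_simp
  calc 3 * (∑ i, √(V i ⬝ᵥ V i)) ^ 2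
      = 3 * (∑ i, (√(V i ⬝ᵥ V i) ^ 3)⁻¹ * (V i ⬝ᵥ V i) ^ 2) ^ 2 := by simp only [hw]
    _ ≤ _ := three_mul_sq_sum_le_card_mul_sum_dotProduct_pow_four _ V
    _ = _ := by
        congr 1
        exact sum_congr rfl fun _ _ => sum_congr rfl fun _ _ => by ring

theorem sum_abs_dotProduct_le [DecidableEq κ] {V : Matrix ι κ ℝ} (hV : Vᵀ * V = 1)
    (hκ : 2 ≤ Fintype.card κ) :
    ∑ i, ∑ j, |V i ⬝ᵥ V j| ≤ Fintype.card ι * (2 / ((Fintype.card κ : ℝ) + 1) *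
      (1 + ((Fintype.card κ : ℝ) - 1) / 2 * √((Fintype.card κ : ℝ) + 2))) := by
  have hm : (2 : ℝ) ≤ Fintype.card κ := by exact_mod_cast hκ
  set m : ℝ := (Fintype.card κ : ℝ)
  set t : ι → ℝ := fun i => √(V i ⬝ᵥ V i)
  have hm₂ : √(m + 2) ^ 2 - 2 = m := by rw [Real.sq_sqrt (by linarith)]; ring
  rw [two_div_mul_one_add_mul_sqrt (by linarith)]
  refine le_of_quartic_bounds (T := ∑ i, t i)
    (Q₂ := ∑ i, ∑ j, (V i ⬝ᵥ V j) ^ 2 / (t i * t j))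
    (Q₄ := ∑ i, ∑ j, (V i ⬝ᵥ V j) ^ 4 / (t i * t j) ^ 3)
    (Real.le_sqrt_of_sq_le (by linarith)) ?_ (sum_sq_dotProduct_div_le_card hV) ?_ ?_
  · rw [hm₂]
    exact sq_sum_sqrt_dotProduct_self_le hV
  · rw [hm₂, Real.sq_sqrt (by linarith)]
    exact three_mul_sq_sum_sqrt_le V
  · calc 2 * (√(m + 2) + 1) ^ 2 * ∑ i, ∑ j, |V i ⬝ᵥ V j|
        = ∑ i, ∑ j, 2 * (√(m + 2) + 1) ^ 2 * |V i ⬝ᵥ V j| := by simp only [mul_sum]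
      _ ≤ ∑ i, ∑ j, ((√(m + 2) + 2) * (t i * t j) +
            √(m + 2) * (√(m + 2) ^ 2 + 2 * √(m + 2) + 3) * ((V i ⬝ᵥ V j) ^ 2 / (t i * t j)) -
            √(m + 2) ^ 3 * ((V i ⬝ᵥ V j) ^ 4 / (t i * t j) ^ 3)) :=
          sum_le_sum fun i _ => sum_le_sum fun j _ =>
            abs_le_quartic_div (Real.sqrt_nonneg _) (abs_dotProduct_le _ _)
      _ = _ := by
          rw [sq (∑ i, t i), sum_mul_sum]
          simp only [sum_add_distrib, sum_sub_distrib, mul_sum]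

end Frame

theorem quasiMaxRelProjConst_real_le_general (m N : ℕ) (hm : 1 < m) :
    quasiMaxRelProjConst ℝ m N ≤ deltaConst m (m * (m + 1) / 2) ∧
    deltaConst m (m * (m + 1) / 2) =
      (2 / ((m : ℝ) + 1)) * (1 + (((m : ℝ) - 1) / 2) * Real.sqrt ((m : ℝ) + 2)) := by
  have hδ := deltaConst_mul_succ_div_two hm.le
  refine ⟨?_, hδ⟩
  have hm' : (1 : ℝ) ≤ m := by exact_mod_cast hm.le
  rw [hδ]
  refine Real.sSup_le ?_ (by positivity)
  rintro _ ⟨U, hU, rfl⟩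
  rw [conjTranspose_eq_transpose_of_trivial] at hU ⊢
  have hV : Uᵀᵀ * Uᵀ = 1 := by rwa [transpose_transpose]
  rw [one_div_mul_eq_div]
  refine div_le_of_le_mul₀ (Nat.cast_nonneg _) (by positivity) ?_
  have hG : ∀ i j, (Uᵀ * U) i j = Uᵀ i ⬝ᵥ Uᵀ j := fun _ _ => rfl
  simpa [hG, Fintype.card_fin, mul_comm] using
    sum_abs_dotProduct_le hV (by rw [Fintype.card_fin]; exact hm)

/-- For `1 < m ≤ N`, the real quasimaximal relative projection constant
satisfies `μ_ℝ(m,N) ≤ δ_{m, m(m+1)/2} = (2/(m+1))(1 + ((m-1)/2)√(m+2))`. -/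
theorem quasiMaxRelProjConst_real_le (m N : ℕ) (hm : 1 < m) (hmN : m ≤ N) :
    quasiMaxRelProjConst ℝ m N ≤ deltaConst m (m * (m + 1) / 2) ∧
    deltaConst m (m * (m + 1) / 2) =
      (2 / ((m : ℝ) + 1)) * (1 + (((m : ℝ) - 1) / 2) * Real.sqrt ((m : ℝ) + 2)) :=
  quasiMaxRelProjConst_real_le_general m N hm
end
end

section
/- For all integers 1 < m ≤ N, the complex quasimaximal relative projection constant satisfies μ_ℂ(m,N) ≤ δ_{m, m²} = (1/m)·(1 + (m−1)·√(m+1)). -/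
/-!
The columns `u i` of `U` form a Parseval frame of `ℂ^m`, with Gram matrix `G = Uᴴ U` and
`∑ i, ‖u i‖² = m`. Write `u i = g i • v i` with `g i = ‖u i‖` and `‖v i‖ ≤ 1`, and let `r = √(m+1)`.
On `[0, 1]` the identity is majorized by the quartic
`q a = (r (r² + 2r + 3) a² - r³ a⁴ + r + 2) / (2 (r + 1)²)`, so
`∑ |G i j| ≤ ∑ g i g j q |⟪v i, v j⟫|`. In the three sums this produces, the quadratic one is at
most `N` by the Parseval identity, the quartic one is at least `2 (∑ g i)² / (m (m + 1))` by the
Welch bound for the matrices `v i v iᴴ`, and `(∑ g i)² ≤ N m`; together they give exactly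
`δ_{m,m²}`. Real-weighted frame potentials are nonnegative by the Schur product theorem, and the
Welch bound is the nonnegativity of one of them.
-/

open scoped BigOperators

noncomputable section

open scoped InnerProductSpace ComplexConjugate ComplexOrder
open Matrix Module

section FramePotential

variable (𝕜 : Type*) [RCLike 𝕜] {E : Type*} [NormedAddCommGroup E] [InnerProductSpace 𝕜 E]
  {ι κ : Type*} [Fintype ι] [Fintype κ]

def framePotential (c : ι → ℝ) (y : ι → E) : ℝ :=
  ∑ i, ∑ j, c i * c j * ‖⟪y i, y j⟫_𝕜‖ ^ 2

variable {𝕜}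

theorem framePotential_nonneg (c : ι → ℝ) (y : ι → E) : 0 ≤ framePotential 𝕜 c y := by
  have hpsd := (posSemidef_gram 𝕜 y).hadamard (posSemidef_gram 𝕜 y).transpose
  have h := hpsd.dotProduct_mulVec_nonneg (fun i => (c i : 𝕜))
  have hform : star (fun i => (c i : 𝕜)) ⬝ᵥ ((gram 𝕜 y ⊙ (gram 𝕜 y)ᵀ) *ᵥ fun i => (c i : 𝕜))
      = (framePotential 𝕜 c y : 𝕜) := by
    simp only [framePotential, dotProduct, mulVec, hadamard_apply, transpose_apply, gram_apply,
      Pi.star_apply, RCLike.star_def, RCLike.conj_ofReal, Finset.mul_sum]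
    push_cast
    refine Finset.sum_congr rfl fun i _ => Finset.sum_congr rfl fun j _ => ?_
    rw [← inner_conj_symm (y j) (y i), RCLike.mul_conj]
    ring
  rw [hform] at h
  exact_mod_cast h

theorem two_mul_sum_le_framePotential_add (c : ι → ℝ) (y : ι → E) (e : κ → ℝ) (w : κ → E) :
    2 * ∑ i, ∑ j, c i * e j * ‖⟪y i, w j⟫_𝕜‖ ^ 2 ≤ framePotential 𝕜 c y + framePotential 𝕜 e w := by
  have h := framePotential_nonneg (𝕜 := 𝕜) (Sum.elim c (-e)) (Sum.elim y w)
  have hswap : ∑ j, ∑ i, e j * c i * ‖⟪w j, y i⟫_𝕜‖ ^ 2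
      = ∑ i, ∑ j, c i * e j * ‖⟪y i, w j⟫_𝕜‖ ^ 2 := by
    rw [Finset.sum_comm]
    simp only [norm_inner_symm (w _), mul_comm (e _)]
  simp only [framePotential, Fintype.sum_sum_type, Sum.elim_inl, Sum.elim_inr, Pi.neg_apply,
    neg_mul, mul_neg, Finset.sum_neg_distrib, Finset.sum_add_distrib] at h ⊢
  linarith

-- This is `0 ≤ ‖A - ρ (1 + φ φᴴ)‖²` in Hilbert–Schmidt norm, for `A = ∑ i, c i • y i y iᴴ`.
theorem two_mul_sum_le_framePotential_add_of_orthonormalBasis (b : OrthonormalBasis κ 𝕜 E)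
    (φ : E) (ρ : ℝ) (c : ι → ℝ) (y : ι → E) :
    2 * ρ * ∑ i, c i * (‖y i‖ ^ 2 + ‖⟪y i, φ⟫_𝕜‖ ^ 2)
      ≤ framePotential 𝕜 c y + ρ ^ 2 * (Fintype.card κ + 2 * ‖φ‖ ^ 2 + ‖φ‖ ^ 4) := by
  have h := two_mul_sum_le_framePotential_add (𝕜 := 𝕜) c y (fun _ : κ ⊕ Unit => ρ)
    (Sum.elim b fun _ => φ)
  simp only [framePotential, Fintype.sum_sum_type, Sum.elim_inl, Sum.elim_inr,
    Finset.sum_add_distrib, ← Finset.mul_sum, b.sum_sq_norm_inner_left, b.sum_sq_norm_inner_right,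
    b.norm_eq_one, inner_self_eq_norm_sq_to_K, norm_pow, RCLike.norm_ofReal, abs_norm,
    Finset.sum_const, Finset.card_univ, one_pow, nsmul_eq_mul, mul_one, Fintype.card_unit,
    Nat.cast_one, one_mul] at h
  calc 2 * ρ * ∑ i, c i * (‖y i‖ ^ 2 + ‖⟪y i, φ⟫_𝕜‖ ^ 2)
      = 2 * ∑ i, c i * ρ * (‖y i‖ ^ 2 + ‖⟪y i, φ⟫_𝕜‖ ^ 2) := by
        simp only [Finset.mul_sum]; ring_nf
    _ ≤ _ := h
    _ = _ := by rw [framePotential]; ring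

end FramePotential

section WelchBound

variable {𝕜 : Type*} [RCLike 𝕜] {n ι : Type*} [Fintype n] [Fintype ι]

-- The matrix `x xᴴ`, flattened; `identityVec` is the flattened identity matrix.
def outerVec (x : EuclideanSpace 𝕜 n) : EuclideanSpace 𝕜 (n × n) :=
  WithLp.toLp 2 fun p => x p.1 * conj (x p.2)

variable (𝕜 n) in
def identityVec [DecidableEq n] : EuclideanSpace 𝕜 (n × n) :=
  WithLp.toLp 2 fun p => if p.1 = p.2 then 1 else 0

theorem inner_outerVec (x y : EuclideanSpace 𝕜 n) :
    ⟪outerVec x, outerVec y⟫_𝕜 = ((‖⟪x, y⟫_𝕜‖ ^ 2 : ℝ) : 𝕜) := by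
  rw [RCLike.ofReal_pow, ← RCLike.mul_conj, ← inner_conj_symm x y]
  simp only [outerVec, PiLp.inner_apply, RCLike.inner_apply, Fintype.sum_prod_type, map_sum,
    Finset.sum_mul_sum, map_mul, RCLike.conj_conj]
  refine Finset.sum_congr rfl fun k _ => Finset.sum_congr rfl fun l _ => ?_
  ring

theorem norm_outerVec_sq (x : EuclideanSpace 𝕜 n) : ‖outerVec x‖ ^ 2 = ‖x‖ ^ 4 := by
  rw [← inner_self_eq_norm_sq (𝕜 := 𝕜), inner_outerVec, RCLike.ofReal_re,
    inner_self_eq_norm_sq_to_K, norm_pow, RCLike.norm_ofReal, abs_norm]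
  ring

theorem inner_outerVec_identityVec [DecidableEq n] (x : EuclideanSpace 𝕜 n) :
    ⟪outerVec x, identityVec 𝕜 n⟫_𝕜 = ((‖x‖ ^ 2 : ℝ) : 𝕜) := by
  simp only [outerVec, identityVec, PiLp.inner_apply, RCLike.inner_apply, Fintype.sum_prod_type,
    EuclideanSpace.norm_sq_eq, RCLike.ofReal_sum]
  refine Finset.sum_congr rfl fun k _ => ?_
  rw [RCLike.ofReal_pow, ← RCLike.conj_mul]
  simp [mul_comm]

theorem norm_identityVec_sq [DecidableEq n] : ‖identityVec 𝕜 n‖ ^ 2 = Fintype.card n := by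
  simp only [identityVec, EuclideanSpace.norm_sq_eq, Fintype.sum_prod_type]
  simp [apply_ite]

theorem welch_bound_two_euclidean (c : ι → ℝ) (x : ι → EuclideanSpace 𝕜 n) :
    2 * (∑ i, c i * ‖x i‖ ^ 4) ^ 2
      ≤ Fintype.card n * (Fintype.card n + 1) * ∑ i, ∑ j, c i * c j * ‖⟪x i, x j⟫_𝕜‖ ^ 4 := by
  classical
  set σ := ∑ i, c i * ‖x i‖ ^ 4
  set d : ℝ := (Fintype.card n : ℝ)
  rcases isEmpty_or_nonempty n with hn | hn
  · have hσ : σ = 0 := by simp [σ, Subsingleton.elim (x _) 0]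
    simp [hσ, d]
  have hD : 0 < d * (d + 1) := by positivity
  set ρ := σ / (d * (d + 1))
  have hρ : ρ * (d * (d + 1)) = σ := div_mul_cancel₀ σ hD.ne'
  have h := two_mul_sum_le_framePotential_add_of_orthonormalBasis
    (EuclideanSpace.basisFun (n × n) 𝕜) (identityVec 𝕜 n) ρ c (outerVec ∘ x)
  simp only [Function.comp_apply, framePotential, inner_outerVec, inner_outerVec_identityVec,
    norm_outerVec_sq, RCLike.ofReal_pow, norm_pow, RCLike.norm_ofReal, abs_norm,
    Fintype.card_prod, Nat.cast_mul, ← pow_mul, Nat.reduceMul, ← two_mul, norm_identityVec_sq] at h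
  have h' : 4 * ρ * σ ≤ ∑ i, ∑ j, c i * c j * ‖⟪x i, x j⟫_𝕜‖ ^ 4 + 2 * ρ ^ 2 * (d * (d + 1)) := by
    have hsum : ∑ i, c i * (2 * ‖x i‖ ^ 4) = 2 * σ := by
      rw [Finset.mul_sum]; exact Finset.sum_congr rfl fun i _ => by ring
    have hφ : ‖identityVec 𝕜 n‖ ^ 4 = d ^ 2 := by
      rw [show 4 = 2 * 2 from rfl, pow_mul, norm_identityVec_sq]
    rw [hsum, hφ, show ((Fintype.card n : ℕ) : ℝ) = d from rfl] at h
    linarith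
  calc 2 * σ ^ 2 = d * (d + 1) * (4 * ρ * σ) - d * (d + 1) * (2 * ρ ^ 2 * (d * (d + 1))) := by
        rw [← hρ]; ring
    _ ≤ d * (d + 1) * ∑ i, ∑ j, c i * c j * ‖⟪x i, x j⟫_𝕜‖ ^ 4 := by
        linarith [mul_le_mul_of_nonneg_left h' hD.le]

variable {E : Type*} [NormedAddCommGroup E] [InnerProductSpace 𝕜 E] [FiniteDimensional 𝕜 E]

theorem welch_bound_two (c : ι → ℝ) (x : ι → E) :
    2 * (∑ i, c i * ‖x i‖ ^ 4) ^ 2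
      ≤ finrank 𝕜 E * (finrank 𝕜 E + 1) * ∑ i, ∑ j, c i * c j * ‖⟪x i, x j⟫_𝕜‖ ^ 4 := by
  simpa [LinearIsometryEquiv.norm_map, LinearIsometryEquiv.inner_map_map] using
    welch_bound_two_euclidean c fun i => (stdOrthonormalBasis 𝕜 E).repr (x i)

end WelchBound

-- The quartic touches `a` at the double point `a = 1 / r` and at `a = 1`.
theorem two_mul_add_one_sq_mul_le_quartic {r a : ℝ} (hr : 0 ≤ r) (ha₀ : 0 ≤ a) (ha₁ : a ≤ 1) :
    2 * (r + 1) ^ 2 * a ≤ r * (r ^ 2 + 2 * r + 3) * a ^ 2 - r ^ 3 * a ^ 4 + (r + 2) := by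
  have h : 0 ≤ (r * a - 1) ^ 2 * ((1 - a) * (r * a + r + 2)) := by
    have : 0 ≤ r * a := mul_nonneg hr ha₀
    exact mul_nonneg (sq_nonneg _) (mul_nonneg (by linarith) (by linarith))
  linear_combination h

theorem two_mul_add_one_sq_mul_sum_sum_le {ι : Type*} [Fintype ι] {r : ℝ} (hr : 0 ≤ r)
    {g : ι → ℝ} (hg : ∀ i, 0 ≤ g i) {a : ι → ι → ℝ} (ha₀ : ∀ i j, 0 ≤ a i j)
    (ha₁ : ∀ i j, a i j ≤ 1) :
    2 * (r + 1) ^ 2 * ∑ i, ∑ j, g i * g j * a i j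
      ≤ r * (r ^ 2 + 2 * r + 3) * ∑ i, ∑ j, g i * g j * a i j ^ 2
        - r ^ 3 * ∑ i, ∑ j, g i * g j * a i j ^ 4 + (r + 2) * (∑ i, g i) ^ 2 := by
  calc 2 * (r + 1) ^ 2 * ∑ i, ∑ j, g i * g j * a i j
      = ∑ i, ∑ j, g i * g j * (2 * (r + 1) ^ 2 * a i j) := by
        simp only [Finset.mul_sum]; ring_nf
    _ ≤ ∑ i, ∑ j, g i * g j *
          (r * (r ^ 2 + 2 * r + 3) * a i j ^ 2 - r ^ 3 * a i j ^ 4 + (r + 2)) := by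
        gcongr with i _ j _
        · exact mul_nonneg (hg i) (hg j)
        · exact two_mul_add_one_sq_mul_le_quartic hr (ha₀ i j) (ha₁ i j)
    _ = _ := by
        rw [sq (∑ i, g i), Finset.sum_mul_sum]
        simp only [Finset.mul_sum, ← Finset.sum_sub_distrib, ← Finset.sum_add_distrib]
        exact Finset.sum_congr rfl fun i _ => Finset.sum_congr rfl fun j _ => by ring

section ParsevalFrame

variable {𝕜 : Type*} [RCLike 𝕜] {E : Type*} [NormedAddCommGroup E] [InnerProductSpace 𝕜 E]
  {ι : Type*} [Fintype ι]

theorem norm_inv_norm_smul_le_one (x : E) : ‖(‖x‖⁻¹ : 𝕜) • x‖ ≤ 1 := by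
  rcases eq_or_ne x 0 with rfl | hx
  · simp
  · exact (norm_smul_inv_norm hx).le

theorem norm_smul_inv_norm_smul (x : E) : (‖x‖ : 𝕜) • (‖x‖⁻¹ : 𝕜) • x = x := by
  rcases eq_or_ne x 0 with rfl | hx
  · simp
  · rw [smul_smul, mul_inv_cancel₀ (by simpa using hx), one_smul]

theorem norm_inner_eq_norm_mul_norm_mul_norm_inner_normalize (x y : E) :
    ‖⟪x, y⟫_𝕜‖ = ‖x‖ * ‖y‖ * ‖⟪(‖x‖⁻¹ : 𝕜) • x, (‖y‖⁻¹ : 𝕜) • y⟫_𝕜‖ := by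
  conv_lhs => rw [← norm_smul_inv_norm_smul (𝕜 := 𝕜) x, ← norm_smul_inv_norm_smul (𝕜 := 𝕜) y]
  rw [inner_smul_left, inner_smul_right, norm_mul, norm_mul, RCLike.norm_conj,
    RCLike.norm_ofReal, RCLike.norm_ofReal, abs_norm, abs_norm, mul_assoc]

variable (𝕜) in
def IsParsevalFrame (u : ι → E) : Prop :=
  ∀ x, ∑ i, ‖⟪u i, x⟫_𝕜‖ ^ 2 = ‖x‖ ^ 2

namespace IsParsevalFrame

variable {u : ι → E}

theorem sum_norm_sq [FiniteDimensional 𝕜 E] (hu : IsParsevalFrame 𝕜 u) :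
    ∑ i, ‖u i‖ ^ 2 = finrank 𝕜 E := by
  let b := stdOrthonormalBasis 𝕜 E
  calc ∑ i, ‖u i‖ ^ 2 = ∑ i, ∑ k, ‖⟪u i, b k⟫_𝕜‖ ^ 2 := by
        simp only [b.sum_sq_norm_inner_left]
    _ = ∑ k, ‖b k‖ ^ 2 := by
        rw [Finset.sum_comm]; exact Finset.sum_congr rfl fun k _ => hu (b k)
    _ = finrank 𝕜 E := by simp [b.norm_eq_one]

theorem sum_sum_mul_norm_inner_normalize_sq_le (hu : IsParsevalFrame 𝕜 u) :
    ∑ i, ∑ j, ‖u i‖ * ‖u j‖ * ‖⟪(‖u i‖⁻¹ : 𝕜) • u i, (‖u j‖⁻¹ : 𝕜) • u j⟫_𝕜‖ ^ 2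
      ≤ Fintype.card ι := by
  set v : ι → E := fun i => (‖u i‖⁻¹ : 𝕜) • u i
  set a : ι → ι → ℝ := fun i j => ‖⟪v i, v j⟫_𝕜‖ ^ 2
  have hrow : ∀ i, ∑ j, ‖u j‖ ^ 2 * a i j ≤ 1 := by
    intro i
    calc ∑ j, ‖u j‖ ^ 2 * a i j = ∑ j, ‖⟪u j, v i⟫_𝕜‖ ^ 2 := by
          refine Finset.sum_congr rfl fun j _ => ?_
          conv_rhs => rw [← norm_smul_inv_norm_smul (𝕜 := 𝕜) (u j)]
          rw [inner_smul_left, norm_mul, RCLike.norm_conj, RCLike.norm_ofReal, abs_norm,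
            norm_inner_symm]
          ring
      _ = ‖v i‖ ^ 2 := hu (v i)
      _ ≤ 1 := pow_le_one₀ (norm_nonneg _) (norm_inv_norm_smul_le_one _)
  have hsymm : ∑ i, ∑ j, ‖u i‖ ^ 2 * a i j = ∑ i, ∑ j, ‖u j‖ ^ 2 * a i j := by
    rw [Finset.sum_comm]
    exact Finset.sum_congr rfl fun i _ => Finset.sum_congr rfl fun j _ => by
      simp only [a]; rw [norm_inner_symm]
  calc ∑ i, ∑ j, ‖u i‖ * ‖u j‖ * a i j
      ≤ ∑ i, ∑ j, (‖u i‖ ^ 2 * a i j + ‖u j‖ ^ 2 * a i j) / 2 := by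
        gcongr with i _ j _
        nlinarith [two_mul_le_add_sq ‖u i‖ ‖u j‖, sq_nonneg ‖⟪v i, v j⟫_𝕜‖]
    _ = ∑ i, ∑ j, ‖u j‖ ^ 2 * a i j := by
        simp only [← Finset.sum_div, Finset.sum_add_distrib, hsymm]; ring
    _ ≤ ∑ _i : ι, 1 := Finset.sum_le_sum fun i _ => hrow i
    _ = Fintype.card ι := by simp

theorem sum_sum_norm_inner_le [FiniteDimensional 𝕜 E] (hu : IsParsevalFrame 𝕜 u)
    (hd : 2 ≤ finrank 𝕜 E) :
    ∑ i, ∑ j, ‖⟪u i, u j⟫_𝕜‖ ≤ Fintype.card ι *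
      ((1 + ((finrank 𝕜 E : ℝ) - 1) * √((finrank 𝕜 E : ℝ) + 1)) / finrank 𝕜 E) := by
  set m : ℝ := (finrank 𝕜 E : ℝ)
  set N : ℝ := (Fintype.card ι : ℝ)
  set r := √(m + 1)
  set g : ι → ℝ := fun i => ‖u i‖
  set v : ι → E := fun i => (‖u i‖⁻¹ : 𝕜) • u i
  have hm : (2 : ℝ) ≤ m := by simp only [m]; exact_mod_cast hd
  have hr : r ^ 2 = m + 1 := Real.sq_sqrt (by positivity)
  have hr₀ : 0 ≤ r := Real.sqrt_nonneg _
  have ha : ∀ i j, ‖⟪v i, v j⟫_𝕜‖ ≤ 1 := fun i j => (norm_inner_le_norm _ _).trans <|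
    mul_le_one₀ (norm_inv_norm_smul_le_one _) (norm_nonneg _) (norm_inv_norm_smul_le_one _)
  have hsum := two_mul_add_one_sq_mul_sum_sum_le hr₀ (fun i => norm_nonneg (u i))
    (fun i j => norm_nonneg ⟪v i, v j⟫_𝕜) ha
  rw [← Finset.sum_congr rfl fun i _ => Finset.sum_congr rfl fun j _ =>
    norm_inner_eq_norm_mul_norm_mul_norm_inner_normalize (u i) (u j)] at hsum
  set σ := ∑ i, g i
  set S₂ := ∑ i, ∑ j, g i * g j * ‖⟪v i, v j⟫_𝕜‖ ^ 2
  set S₄ := ∑ i, ∑ j, g i * g j * ‖⟪v i, v j⟫_𝕜‖ ^ 4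
  have hS₂ : S₂ ≤ N := hu.sum_sum_mul_norm_inner_normalize_sq_le
  have hS₄ : 2 * σ ^ 2 ≤ m * (m + 1) * S₄ := by
    have hgv : ∀ i, g i * ‖v i‖ ^ 4 = g i := by
      intro i
      rcases eq_or_ne (u i) 0 with h | h
      · simp [g, h]
      · simp [v, norm_smul_inv_norm h]
    simpa only [hgv] using welch_bound_two (𝕜 := 𝕜) g v
  have hσ : σ ^ 2 ≤ N * m := by
    simpa [g, hu.sum_norm_sq] using sq_sum_le_card_mul_sum_sq (s := Finset.univ) (f := g)
  have hK : 0 ≤ (r + 2) * m - 2 * r := by nlinarith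
  have hr₃ : r ^ 3 * S₄ * m = r * (m * (m + 1) * S₄) := by
    rw [pow_succ, mul_comm _ r, hr]; ring
  have hcoef : N * (m * (r * (r ^ 2 + 2 * r + 3) + ((r + 2) * m - 2 * r)))
      = N * (2 * (r + 1) ^ 2 * (1 + (m - 1) * r)) := by
    rw [show m = r ^ 2 - 1 by linarith]; ring
  rw [mul_div_assoc', le_div_iff₀ (by positivity)]
  refine le_of_mul_le_mul_left ?_ (by positivity : (0 : ℝ) < 2 * (r + 1) ^ 2)
  linarith [mul_le_mul_of_nonneg_left hS₂ (by positivity : 0 ≤ r * (r ^ 2 + 2 * r + 3) * m),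
    mul_le_mul_of_nonneg_left hS₄ hr₀, mul_le_mul_of_nonneg_left hσ hK,
    mul_le_mul_of_nonneg_right hsum (by positivity : 0 ≤ m)]

end IsParsevalFrame

end ParsevalFrame

theorem deltaConst_self_sq (m : ℕ) :
    deltaConst m (m ^ 2) = 1 / (m : ℝ) * (1 + ((m : ℝ) - 1) * √((m : ℝ) + 1)) := by
  rcases m.eq_zero_or_pos with rfl | hm
  · simp [deltaConst]
  have hm₁ : (1 : ℝ) ≤ m := by exact_mod_cast hm
  have hrad : ((m : ℝ) ^ 2 - 1) * ((m : ℝ) ^ 2 - m) / m = ((m : ℝ) - 1) ^ 2 * ((m : ℝ) + 1) := by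
    field_simp
    ring
  rw [deltaConst, Nat.cast_pow, hrad, Real.sqrt_mul (sq_nonneg _), Real.sqrt_sq (by linarith)]
  congr 1
  field_simp

section Columns

variable {𝕜 : Type*} [RCLike 𝕜] {n ι : Type*} [Fintype n]

theorem inner_toLp_transpose (U : Matrix n ι 𝕜) (i j : ι) :
    ⟪WithLp.toLp 2 (Uᵀ i), WithLp.toLp 2 (Uᵀ j)⟫_𝕜 = (Uᴴ * U) i j := by
  simp [EuclideanSpace.inner_toLp_toLp, Matrix.mul_apply, dotProduct, mul_comm]

theorem isParsevalFrame_toLp_transpose [Fintype ι] [DecidableEq n] {U : Matrix n ι 𝕜}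
    (hU : U * Uᴴ = 1) : IsParsevalFrame 𝕜 fun j => WithLp.toLp 2 (Uᵀ j) := by
  intro x
  have h : ⟪WithLp.toLp 2 (Uᴴ *ᵥ x), WithLp.toLp 2 (Uᴴ *ᵥ x)⟫_𝕜 = ⟪x, x⟫_𝕜 := by
    rw [EuclideanSpace.inner_toLp_toLp, star_mulVec, conjTranspose_conjTranspose, dotProduct_comm,
      ← dotProduct_mulVec, mulVec_mulVec, hU, one_mulVec, dotProduct_comm]
    rfl
  calc ∑ j, ‖⟪WithLp.toLp 2 (Uᵀ j), x⟫_𝕜‖ ^ 2 = ∑ j, ‖(Uᴴ *ᵥ x) j‖ ^ 2 := by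
        simp [PiLp.inner_apply, RCLike.inner_apply, mulVec, dotProduct, mul_comm]
    _ = ‖WithLp.toLp 2 (Uᴴ *ᵥ x)‖ ^ 2 := by rw [EuclideanSpace.norm_sq_eq]
    _ = ‖x‖ ^ 2 := by rw [← inner_self_eq_norm_sq (𝕜 := 𝕜), h, inner_self_eq_norm_sq]

end Columns

theorem quasiMaxRelProjConst_complex_le_general (m N : ℕ) (hm : 1 < m) :
    quasiMaxRelProjConst ℂ m N ≤ deltaConst m (m ^ 2) ∧
    deltaConst m (m ^ 2) =
      (1 / (m : ℝ)) * (1 + ((m : ℝ) - 1) * Real.sqrt ((m : ℝ) + 1)) := by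
  refine ⟨?_, deltaConst_self_sq m⟩
  have hm₁ : (1 : ℝ) ≤ m := by exact_mod_cast hm.le
  have hB : 0 ≤ (1 + ((m : ℝ) - 1) * √((m : ℝ) + 1)) / m := by
    have := Real.sqrt_nonneg ((m : ℝ) + 1)
    apply div_nonneg <;> nlinarith
  rw [deltaConst_self_sq, one_div_mul_eq_div]
  refine Real.sSup_le ?_ hB
  rintro _ ⟨U, hU, rfl⟩
  have h := (isParsevalFrame_toLp_transpose hU).sum_sum_norm_inner_le
    (by rw [finrank_euclideanSpace_fin]; exact hm)
  simp only [inner_toLp_transpose, finrank_euclideanSpace_fin, Fintype.card_fin] at h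
  calc 1 / (N : ℝ) * ∑ i, ∑ j, ‖(Uᴴ * U) i j‖ ≤ 1 / N * (N * ((1 + (m - 1) * √(m + 1)) / m)) := by
        gcongr
    _ ≤ (1 + ((m : ℝ) - 1) * √((m : ℝ) + 1)) / m := by
        rw [← mul_assoc]
        refine mul_le_of_le_one_left hB ?_
        rcases N.eq_zero_or_pos with rfl | hN
        · simp
        · exact (one_div_mul_cancel (by positivity)).le

/-- For `1 < m ≤ N`, the complex quasimaximal relative projection constant
satisfies `μ_ℂ(m,N) ≤ δ_{m, m²} = (1/m)(1 + (m-1)√(m+1))`. -/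
theorem quasiMaxRelProjConst_complex_le (m N : ℕ) (hm : 1 < m) (hmN : m ≤ N) :
    quasiMaxRelProjConst ℂ m N ≤ deltaConst m (m ^ 2) ∧
    deltaConst m (m ^ 2) =
      (1 / (m : ℝ)) * (1 + ((m : ℝ) - 1) * Real.sqrt ((m : ℝ) + 1)) :=
  quasiMaxRelProjConst_complex_le_general m N hm
end
end

section
/- Let K = ℝ or ℂ and let u_1,…,u_N ∈ K^m be nonzero vectors whose associated matrix U (with columns u_1,…,u_N) satisfies U U* = I_m. Then ∑_{i,j=1}^N |⟨u_i,u_j⟩|² / (‖u_i‖·‖u_j‖) ≤ N. -/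
open scoped BigOperators

noncomputable section

/-!
A matrix `U` with `U Uᴴ = 1` makes its columns a Parseval frame: `∑ⱼ |⟨x, uⱼ⟩|² = ‖x‖²`. Taking
`x = uᵢ` shows that the nonnegative symmetric matrix `aᵢⱼ = |⟨uᵢ, uⱼ⟩|²` has row sums `‖uᵢ‖²`.
By AM-GM, `aᵢⱼ / (‖uᵢ‖ ‖uⱼ‖) ≤ (aᵢⱼ / ‖uᵢ‖² + aᵢⱼ / ‖uⱼ‖²) / 2`, and after symmetrising, the
double sum is at most `∑ᵢ (∑ⱼ aᵢⱼ) / ‖uᵢ‖² ≤ N`.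
-/

open Finset
open scoped InnerProductSpace Matrix

theorem two_mul_inv_mul_le_inv_sq_add_inv_sq (x y : ℝ) :
    2 * (x * y)⁻¹ ≤ (x ^ 2)⁻¹ + (y ^ 2)⁻¹ := by
  rw [mul_inv, ← inv_pow, ← inv_pow, ← mul_assoc]
  exact two_mul_le_add_sq x⁻¹ y⁻¹

theorem sum_sum_div_mul_le_card_s6 {ι : Type*} [Fintype ι] (a : ι → ι → ℝ) (c : ι → ℝ)
    (ha : ∀ i j, 0 ≤ a i j) (hsymm : ∀ i j, a i j = a j i) (hrow : ∀ i, ∑ j, a i j ≤ c i ^ 2) :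
    ∑ i, ∑ j, a i j / (c i * c j) ≤ Fintype.card ι := by
  have hterm : ∀ i j, a i j / (c i * c j) ≤ (a i j / c i ^ 2 + a i j / c j ^ 2) / 2 := by
    intro i j
    calc a i j / (c i * c j) = a i j * (2 * (c i * c j)⁻¹) / 2 := by ring
      _ ≤ a i j * ((c i ^ 2)⁻¹ + (c j ^ 2)⁻¹) / 2 := by
        gcongr
        · exact ha i j
        · exact two_mul_inv_mul_le_inv_sq_add_inv_sq (c i) (c j)
      _ = (a i j / c i ^ 2 + a i j / c j ^ 2) / 2 := by ring
  have hswap : ∑ i, ∑ j, a i j / c j ^ 2 = ∑ i, ∑ j, a i j / c i ^ 2 := by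
    rw [sum_comm]
    exact sum_congr rfl fun i _ => sum_congr rfl fun j _ => by rw [hsymm]
  have hrow_le_one : ∀ i, ∑ j, a i j / c i ^ 2 ≤ 1 := fun i => by
    rw [← sum_div]
    exact div_le_one_of_le₀ (hrow i) (sq_nonneg _)
  calc ∑ i, ∑ j, a i j / (c i * c j)
      ≤ ∑ i, ∑ j, (a i j / c i ^ 2 + a i j / c j ^ 2) / 2 :=
        sum_le_sum fun i _ => sum_le_sum fun j _ => hterm i j
    _ = (∑ i, ∑ j, a i j / c i ^ 2 + ∑ i, ∑ j, a i j / c j ^ 2) / 2 := by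
      simp only [add_div, sum_div, sum_add_distrib]
    _ = ∑ i, ∑ j, a i j / c i ^ 2 := by rw [hswap]; ring
    _ ≤ ∑ _i : ι, 1 := sum_le_sum fun i _ => hrow_le_one i
    _ = Fintype.card ι := by simp

section ParsevalFrame

variable {K ι n : Type*} [RCLike K] [Fintype ι] [Fintype n] [DecidableEq n]
  (u : ι → EuclideanSpace K n)
  (hU : (Matrix.of fun k i => u i k) * (Matrix.of fun k i => u i k).conjTranspose = 1)
include hU

theorem sum_inner_smul_eq_self_of_mul_conjTranspose_eq_one (x : EuclideanSpace K n) :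
    ∑ j, ⟪u j, x⟫_K • u j = x := by
  set U : Matrix n ι K := Matrix.of fun k i => u i k
  have hx : U *ᵥ (Uᴴ *ᵥ x.ofLp) = x.ofLp := by
    rw [Matrix.mulVec_mulVec, hU, Matrix.one_mulVec]
  ext k
  rw [← congrFun hx k]
  simp [U, Matrix.mulVec, dotProduct, PiLp.inner_apply, mul_comm]

theorem sum_norm_inner_sq_eq_norm_sq_of_mul_conjTranspose_eq_one (x : EuclideanSpace K n) :
    ∑ j, ‖⟪x, u j⟫_K‖ ^ 2 = ‖x‖ ^ 2 := by
  have h := congrArg (⟪x, ·⟫_K) (sum_inner_smul_eq_self_of_mul_conjTranspose_eq_one u hU x)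
  have hterm : ∀ j, ⟪u j, x⟫_K * ⟪x, u j⟫_K = (‖⟪x, u j⟫_K‖ ^ 2 : ℝ) := fun j => by
    rw [← inner_conj_symm x, RCLike.mul_conj, RCLike.norm_conj]
    norm_cast
  simp only [inner_sum, inner_smul_right, hterm, inner_self_eq_norm_sq_to_K] at h
  exact_mod_cast h

end ParsevalFrame

theorem sum_normalized_inner_sq_le_general (K : Type*) [RCLike K] (m N : ℕ)
    (u : Fin N → EuclideanSpace K (Fin m))
    (hU : (Matrix.of fun k i => u i k : Matrix (Fin m) (Fin N) K) *
        (Matrix.of fun k i => u i k : Matrix (Fin m) (Fin N) K).conjTranspose = 1) :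
    ∑ i, ∑ j, ‖(inner K (u i) (u j) : K)‖ ^ 2 / (‖u i‖ * ‖u j‖) ≤ (N : ℝ) := by
  have hrow : ∀ i, ∑ j, ‖⟪u i, u j⟫_K‖ ^ 2 ≤ ‖u i‖ ^ 2 := fun i =>
    (sum_norm_inner_sq_eq_norm_sq_of_mul_conjTranspose_eq_one u hU (u i)).le
  simpa using sum_sum_div_mul_le_card_s6 (fun i j => ‖⟪u i, u j⟫_K‖ ^ 2) (‖u ·‖)
    (fun _ _ => by positivity) (fun i j => by rw [norm_inner_symm]) hrow

/-- If `u 1, …, u N ∈ K^m` are nonzero vectors whose associated matrix `U`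
(with columns `u i`) satisfies `U Uᴴ = I_m`, then
`∑_{i,j} |⟨u_i,u_j⟩|² / (‖u_i‖ ‖u_j‖) ≤ N`. -/
theorem sum_normalized_inner_sq_le (K : Type*) [RCLike K] (m N : ℕ)
    (u : Fin N → EuclideanSpace K (Fin m)) (hu : ∀ i, u i ≠ 0)
    (hU : (Matrix.of fun k i => u i k : Matrix (Fin m) (Fin N) K) *
        (Matrix.of fun k i => u i k : Matrix (Fin m) (Fin N) K).conjTranspose = 1) :
    ∑ i, ∑ j, ‖(inner K (u i) (u j) : K)‖ ^ 2 / (‖u i‖ * ‖u j‖) ≤ (N : ℝ) :=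
  sum_normalized_inner_sq_le_general K m N u hU
end
end

section
/- Let K = ℝ or ℂ, let U ∈ K^{m×N} satisfy U U* = I_m with columns u_1,…,u_N, and let n_1,…,n_N be positive integers. Set Ñ = n_1² + ⋯ + n_N². Then the matrix V ∈ K^{m×Ñ} whose columns consist, for each i = 1,…,N, of n_i² copies of (1/n_i)·u_i, satisfies V V* = I_m and (1/Ñ)∑_{i,j=1}^{Ñ} |(V*V)_{ij}| = (1/Ñ)∑_{i,j=1}^{N} n_i·n_j·|⟨u_i,u_j⟩|. In particular μ_K(m,Ñ) ≥ (1/Ñ)∑_{i,j=1}^{N} n_i n_j |⟨u_i,u_j⟩|. -/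
open scoped BigOperators

noncomputable section

/-!
Write `W = U · diag(1/n)`; then `V` is `W` with its `i`-th column repeated `n_i²` times.
Repeating columns with multiplicities `w` turns `V Vᴴ` into `W · diag(w) · Wᴴ`, which for
`w = n²` is `U Uᴴ = 1`, and turns the Gram matrix `Vᴴ V` into the `n_i² × n_j²` block matrix with
constant blocks `(Wᴴ W)_{ij} = ⟨u_i, u_j⟩ / (n_i n_j)`; the absolute values of block `(i, j)` add up
to `n_i n_j |⟨u_i, u_j⟩|`. The supremum defining `μ_K(m, N)` is over a bounded set, because the
entries of a matrix with orthonormal rows have modulus at most one.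
-/

open Finset Matrix

theorem Fintype.sum_comp_eq_sum_nsmul {ι κ M : Type*} [Fintype ι] [Fintype κ] [DecidableEq κ]
    [AddCommMonoid M] (c : ι → κ) (w : κ → ℕ) (hc : ∀ i, (univ.filter fun j => c j = i).card = w i)
    (f : κ → M) :
    ∑ p, f (c p) = ∑ i, w i • f i := by
  rw [← Finset.sum_fiberwise univ c fun p => f (c p)]
  refine Finset.sum_congr rfl fun i _ => ?_
  rw [Finset.sum_congr rfl fun p hp => congrArg f (mem_filter.1 hp).2, sum_const, hc]

theorem Fintype.sum_sum_comp_eq_sum_sum_mul {ι κ R : Type*} [Fintype ι] [Fintype κ]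
    [DecidableEq κ] [Semiring R] (c : ι → κ) (w : κ → ℕ)
    (hc : ∀ i, (univ.filter fun j => c j = i).card = w i) (f : κ → κ → R) :
    ∑ p, ∑ q, f (c p) (c q) = ∑ i, ∑ j, (w i : R) * w j * f i j := by
  simp only [Fintype.sum_comp_eq_sum_nsmul c w hc (f (c _))]
  rw [Fintype.sum_comp_eq_sum_nsmul c w hc fun i => ∑ j, w j • f i j]
  simp only [nsmul_eq_mul, mul_sum, ← mul_assoc]

namespace Matrix

theorem conjTranspose_submatrix_mul_submatrix {α l ι κ : Type*} [Mul α] [AddCommMonoid α]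
    [Star α] [Fintype l] (W : Matrix l κ α) (c : ι → κ) :
    (W.submatrix id c)ᴴ * W.submatrix id c = (Wᴴ * W).submatrix c c := by
  rw [conjTranspose_submatrix, submatrix_mul _ _ _ _ _ Function.bijective_id]

variable {K l ι κ : Type*} [RCLike K] [Fintype κ]

theorem submatrix_mul_conjTranspose_of_card_fiber [Fintype ι] [DecidableEq κ] (W : Matrix l κ K)
    (c : ι → κ) (w : κ → ℕ) (hc : ∀ i, (univ.filter fun j => c j = i).card = w i) :
    W.submatrix id c * (W.submatrix id c)ᴴ = W * diagonal (fun i => (w i : K)) * Wᴴ := by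
  ext k k'
  rw [mul_apply, mul_apply]
  simp only [submatrix_apply, conjTranspose_apply, id, mul_diagonal]
  rw [Fintype.sum_comp_eq_sum_nsmul c w hc fun i => W k i * star (W k' i)]
  exact sum_congr rfl fun i _ => by rw [nsmul_eq_mul]; ring

theorem mul_diagonal_mul_diagonal_mul_conjTranspose [DecidableEq κ] (U : Matrix l κ K)
    (a b : κ → K) :
    U * diagonal a * diagonal b * (U * diagonal a)ᴴ =
      U * diagonal (fun i => a i * b i * star (a i)) * Uᴴ := by
  simp only [conjTranspose_mul, diagonal_conjTranspose, Matrix.mul_assoc]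
  rw [← Matrix.mul_assoc (diagonal b), diagonal_mul_diagonal, ← Matrix.mul_assoc (diagonal a),
    diagonal_mul_diagonal]
  simp only [mul_assoc, Pi.star_apply]

theorem norm_gram_mul_diagonal_apply [Fintype l] [DecidableEq κ] (U : Matrix l κ K) (a : κ → K)
    (i j : κ) :
    ‖((U * diagonal a)ᴴ * (U * diagonal a)) i j‖ = ‖a i‖ * ‖(Uᴴ * U) i j‖ * ‖a j‖ := by
  rw [conjTranspose_mul, diagonal_conjTranspose, Matrix.mul_assoc, ← Matrix.mul_assoc Uᴴ,
    diagonal_mul, mul_diagonal, norm_mul, norm_mul, Pi.star_apply, norm_star, mul_assoc]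

theorem norm_apply_le_one_of_mul_conjTranspose_eq_one [DecidableEq l] {W : Matrix l κ K}
    (hW : W * Wᴴ = 1) (k : l) (j : κ) : ‖W k j‖ ≤ 1 := by
  have hrow : ∑ q, ‖W k q‖ ^ 2 = 1 := by
    have hkk := congrFun (congrFun hW k) k
    simp only [mul_apply, conjTranspose_apply, one_apply_eq, ← starRingEnd_apply,
      RCLike.mul_conj] at hkk
    exact_mod_cast hkk
  have hentry : ‖W k j‖ ^ 2 ≤ 1 :=
    hrow ▸ single_le_sum (fun q _ => sq_nonneg ‖W k q‖) (mem_univ j)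
  exact (sq_le_one_iff₀ (norm_nonneg _)).1 hentry

theorem norm_conjTranspose_mul_self_apply_le [Fintype l] [DecidableEq l] {W : Matrix l κ K}
    (hW : W * Wᴴ = 1) (i j : κ) : ‖(Wᴴ * W) i j‖ ≤ Fintype.card l :=
  calc ‖(Wᴴ * W) i j‖ ≤ ∑ k, ‖Wᴴ i k * W k j‖ := norm_sum_le _ _
    _ ≤ ∑ _k : l, (1 : ℝ) := sum_le_sum fun k _ => by
        rw [norm_mul, conjTranspose_apply, norm_star]
        exact mul_le_one₀ (norm_apply_le_one_of_mul_conjTranspose_eq_one hW k i) (norm_nonneg _)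
          (norm_apply_le_one_of_mul_conjTranspose_eq_one hW k j)
    _ = Fintype.card l := by simp

end Matrix

theorem le_quasiMaxRelProjConst {K : Type*} [RCLike K] {m N : ℕ} {W : Matrix (Fin m) (Fin N) K}
    (hW : W * Wᴴ = 1) :
    (1 / (N : ℝ)) * ∑ i, ∑ j, ‖(Wᴴ * W) i j‖ ≤ quasiMaxRelProjConst K m N := by
  refine le_csSup ⟨1 / (N : ℝ) * ∑ _i : Fin N, ∑ _j : Fin N, (m : ℝ), ?_⟩ ⟨W, hW, rfl⟩
  rintro _ ⟨W', hW', rfl⟩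
  gcongr with i _ j _
  simpa using norm_conjTranspose_mul_self_apply_le hW' i j

theorem blowup_matrix_general (K : Type*) [RCLike K] (m N N₂ : ℕ)
    (U : Matrix (Fin m) (Fin N) K) (hU : U * U.conjTranspose = 1)
    (n : Fin N → ℕ) (hn : ∀ i, 0 < n i)
    (c : Fin N₂ → Fin N)
    (hc : ∀ i, (Finset.univ.filter fun j => c j = i).card = n i ^ 2)
    (V : Matrix (Fin m) (Fin N₂) K)
    (hV : ∀ k j, V k j = ((n (c j) : K))⁻¹ * U k (c j)) :
    V * V.conjTranspose = 1 ∧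
    (1 / (N₂ : ℝ)) * ∑ i, ∑ j, ‖(V.conjTranspose * V) i j‖ =
      (1 / (N₂ : ℝ)) * ∑ i, ∑ j, (n i : ℝ) * (n j : ℝ) * ‖(U.conjTranspose * U) i j‖ ∧
    (1 / (N₂ : ℝ)) * ∑ i, ∑ j, (n i : ℝ) * (n j : ℝ) * ‖(U.conjTranspose * U) i j‖ ≤
      quasiMaxRelProjConst K m N₂ := by
  set W := U * diagonal fun i => (n i : K)⁻¹
  have hVW : V = W.submatrix id c := by
    ext k j
    simp [W, hV, mul_comm]
  have hVV : V * Vᴴ = 1 := by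
    have hweights :
        (fun i => (n i : K)⁻¹ * ((n i ^ 2 : ℕ) : K) * star (n i : K)⁻¹) = fun _ => 1 :=
      funext fun i => by
        have : (n i : K) ≠ 0 := Nat.cast_ne_zero.2 (hn i).ne'
        simp [field]
    rw [hVW, submatrix_mul_conjTranspose_of_card_fiber W c _ hc,
      mul_diagonal_mul_diagonal_mul_conjTranspose, hweights, diagonal_one, Matrix.mul_one, hU]
  have hsum : ∑ p, ∑ q, ‖(Vᴴ * V) p q‖ = ∑ i, ∑ j, (n i : ℝ) * n j * ‖(Uᴴ * U) i j‖ := by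
    simp only [hVW, conjTranspose_submatrix_mul_submatrix, submatrix_apply]
    rw [Fintype.sum_sum_comp_eq_sum_sum_mul c _ hc fun i j => ‖(Wᴴ * W) i j‖]
    refine Finset.sum_congr rfl fun i _ => Finset.sum_congr rfl fun j _ => ?_
    rw [norm_gram_mul_diagonal_apply, norm_inv, norm_inv, RCLike.norm_natCast,
      RCLike.norm_natCast]
    have : (n i : ℝ) ≠ 0 := Nat.cast_ne_zero.2 (hn i).ne'
    have : (n j : ℝ) ≠ 0 := Nat.cast_ne_zero.2 (hn j).ne'
    push_cast
    field_simp
  exact ⟨hVV, by rw [hsum], hsum ▸ le_quasiMaxRelProjConst hVV⟩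

/-- Let `U ∈ K^{m×N}` with columns `u 1, …, u N` satisfy `U Uᴴ = I_m`, let
`n 1, …, n N` be positive integers and `N₂ = ∑ n_i²`. Then the matrix `V ∈ K^{m×N₂}` whose
columns consist, for each `i`, of `n_i²` copies of `(1/n_i) u_i` (encoded by a block-assignment
map `c : Fin N₂ → Fin N` whose fibre over `i` has `n_i²` elements) satisfies `V Vᴴ = I_m` and
`(1/N₂) ∑_{i,j} |(VᴴV)_{ij}| = (1/N₂) ∑_{i,j} n_i n_j |⟨u_i,u_j⟩|`; in particular
`μ_K(m,N₂) ≥ (1/N₂) ∑_{i,j} n_i n_j |⟨u_i,u_j⟩|`. -/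
theorem blowup_matrix (K : Type*) [RCLike K] (m N N₂ : ℕ)
    (U : Matrix (Fin m) (Fin N) K) (hU : U * U.conjTranspose = 1)
    (n : Fin N → ℕ) (hn : ∀ i, 0 < n i) (hN₂ : N₂ = ∑ i, n i ^ 2)
    (c : Fin N₂ → Fin N)
    (hc : ∀ i, (Finset.univ.filter fun j => c j = i).card = n i ^ 2)
    (V : Matrix (Fin m) (Fin N₂) K)
    (hV : ∀ k j, V k j = ((n (c j) : K))⁻¹ * U k (c j)) :
    V * V.conjTranspose = 1 ∧
    (1 / (N₂ : ℝ)) * ∑ i, ∑ j, ‖(V.conjTranspose * V) i j‖ =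
      (1 / (N₂ : ℝ)) * ∑ i, ∑ j, (n i : ℝ) * (n j : ℝ) * ‖(U.conjTranspose * U) i j‖ ∧
    (1 / (N₂ : ℝ)) * ∑ i, ∑ j, (n i : ℝ) * (n j : ℝ) * ‖(U.conjTranspose * U) i j‖ ≤
      quasiMaxRelProjConst K m N₂ :=
  blowup_matrix_general K m N N₂ U hU n hn c hc V hV
end
end
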